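/- For λ ∈ [4/19, 1], the function m̄₁(λ) := (π c₆ / 2) [ ((1 − λ)/2) ln λ + ((λ + 1)²/(2λ)) ln(λ + 1) ] is increasing, and in particular its infimum over [4/19, 1] equals m̄₁(4/19) > 0.0125, where c₆ = 5/(18√3). -/

import Mathlib

/-!
On `(0, 1]` the bracket of `m̄₁` has derivative `1/λ - (ln λ)/2 - (1 - λ²)/(2λ²) · ln(1 + λ)`.
Here `-(ln λ)/2 ≥ 0`, and `ln(1 + λ) ≤ λ` bounds the last term by `(1 - λ²)/(2λ) < 1/λ`, so the
derivative is positive and `m̄₁` is strictly increasing. The value at `4/19` is then estimated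
from truncated Taylor series of `ln(1 - x)` at `x = -4/19` and `x = 3/19`.
-/

open Real Set

noncomputable def c6 : ℝ := 5 / (18 * Real.sqrt 3)

noncomputable def mbar1 (l : ℝ) : ℝ :=
  π * c6 / 2 * ((1 - l) / 2 * Real.log l + (l + 1) ^ 2 / (2 * l) * Real.log (l + 1))

lemma c6_pos : 0 < c6 := by
  unfold c6
  positivity

lemma hasDerivAt_mbar1 {x : ℝ} (hx : 0 < x) :
    HasDerivAt mbar1
      (π * c6 / 2 * (1 / x - log x / 2 - (1 - x ^ 2) / (2 * x ^ 2) * log (x + 1))) x := by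
  have hx1 : x + 1 ≠ 0 := by positivity
  have hlin : HasDerivAt (fun l : ℝ => (1 - l) / 2) (-1 / 2) x := by
    simpa using ((hasDerivAt_id x).const_sub 1).div_const 2
  have hsq : HasDerivAt (fun l : ℝ => (l + 1) ^ 2 / (2 * l))
      ((2 * (x + 1) * (2 * x) - (x + 1) ^ 2 * 2) / (2 * x) ^ 2) x := by
    refine HasDerivAt.div ?_ ?_ (by positivity)
    · simpa using ((hasDerivAt_id x).add_const 1).fun_pow 2
    · simpa using (hasDerivAt_id x).const_mul 2
  have hlog1 : HasDerivAt (fun l : ℝ => log (l + 1)) (1 / (x + 1)) x := by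
    simpa using ((hasDerivAt_id x).add_const 1).log hx1
  refine (((hlin.mul (hasDerivAt_log hx.ne')).add (hsq.mul hlog1)).const_mul
    (π * c6 / 2)).congr_deriv ?_
  field_simp
  ring

lemma mbar1_deriv_bracket_pos {x : ℝ} (hx0 : 0 < x) (hx1 : x ≤ 1) :
    0 < 1 / x - log x / 2 - (1 - x ^ 2) / (2 * x ^ 2) * log (x + 1) := by
  have hlog : log x ≤ 0 := log_nonpos hx0.le hx1
  have hcoef : 0 ≤ (1 - x ^ 2) / (2 * x ^ 2) := by
    apply div_nonneg <;> nlinarith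
  have hlog1 : log (x + 1) ≤ x := by linarith [log_le_sub_one_of_pos (by linarith : 0 < x + 1)]
  have hlast : (1 - x ^ 2) / (2 * x ^ 2) * log (x + 1) < 1 / x :=
    calc (1 - x ^ 2) / (2 * x ^ 2) * log (x + 1)
        ≤ (1 - x ^ 2) / (2 * x ^ 2) * x := mul_le_mul_of_nonneg_left hlog1 hcoef
      _ = (1 - x ^ 2) / (2 * x) := by field_simp
      _ < 1 / x := by
        rw [div_lt_div_iff₀ (by positivity) hx0]
        nlinarith
  linarith

lemma mbar1_strictMonoOn : StrictMonoOn mbar1 (Ioc 0 1) := by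
  have hderiv : ∀ x ∈ Ioc (0 : ℝ) 1, HasDerivAt mbar1 _ x := fun x hx => hasDerivAt_mbar1 hx.1
  refine strictMonoOn_of_hasDerivWithinAt_pos (convex_Ioc 0 1)
    (fun x hx => (hderiv x hx).continuousAt.continuousWithinAt)
    (fun x hx => (hderiv x (interior_subset hx)).hasDerivWithinAt) fun x hx => ?_
  have hx := interior_subset hx
  exact mul_pos (by have := c6_pos; positivity) (mbar1_deriv_bracket_pos hx.1 hx.2)

lemma log_twentythree_div_nineteen_gt : 0.191055 < log (23 / 19) := by
  have h := abs_log_sub_add_sum_range_le (x := -(4 / 19)) (by norm_num [abs_of_pos]) 9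
  norm_num [Finset.sum_range_succ, abs_of_pos] at h ⊢
  linarith [(abs_le.1 h).1]

lemma log_four_div_nineteen_gt : -1.5581448 < log (4 / 19) := by
  have h := abs_log_sub_add_sum_range_le (x := 3 / 19) (by norm_num [abs_of_pos]) 9
  norm_num [Finset.sum_range_succ, abs_of_pos] at h
  have hsplit : log (4 / 19) = log (16 / 19) - 2 * log 2 := by
    rw [← log_rpow two_pos, ← log_div (by norm_num) (by norm_num)]
    norm_num
  linarith [(abs_le.1 h).1, log_two_lt_d9]

lemma mbar1_four_div_nineteen_gt : 0.0125 < mbar1 (4 / 19) := by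
  have hsqrt : 0 < √3 := by positivity
  have hsqrt_lt : √3 < 1.7320509 := by
    rw [sqrt_lt' (by norm_num)]
    norm_num
  have hval : mbar1 (4 / 19) =
      π * 5 / (36 * √3) * (15 / 38 * log (4 / 19) + 529 / 152 * log (23 / 19)) := by
    unfold mbar1 c6
    rw [show (4 / 19 + 1 : ℝ) = 23 / 19 by norm_num]
    field_simp
    ring
  have hbracket : 0.0498538 < 15 / 38 * log (4 / 19) + 529 / 152 * log (23 / 19) := by
    linarith [log_four_div_nineteen_gt, log_twentythree_div_nineteen_gt]
  rw [hval, div_mul_eq_mul_div, lt_div_iff₀ (by positivity)]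
  nlinarith [pi_gt_d6]

/-- On `[4/19, 1]` the function `m̄₁` is increasing; in particular its infimum over
`[4/19, 1]` is attained at `4/19` and `m̄₁(4/19) > 0.0125`. -/
theorem stmt17 :
    StrictMonoOn mbar1 (Set.Icc (4 / 19 : ℝ) 1) ∧
    IsLeast (mbar1 '' Set.Icc (4 / 19 : ℝ) 1) (mbar1 (4 / 19)) ∧
    0.0125 < mbar1 (4 / 19) := by
  have hmono : StrictMonoOn mbar1 (Icc (4 / 19) 1) :=
    mbar1_strictMonoOn.mono fun x hx => ⟨by linarith [hx.1], hx.2⟩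
  exact ⟨hmono, hmono.monotoneOn.map_isLeast (isLeast_Icc (by norm_num)),
    mbar1_four_div_nineteen_gt⟩
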